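/- Let G be a finite group, N ⊴ G, and A ⊴ G with A ⊆ N. If G is relative almost monomial with respect to N, then G/A is relative almost monomial with respect to N/A. -/

import Mathlib

open scoped Classical

noncomputable section

/-- The inner product of two class functions on a finite group. -/
def cdot (G : Type*) [Group G] [Finite G] (f h : G → ℂ) : ℂ :=
  (Nat.card G : ℂ)⁻¹ * ∑ᶠ g : G, f g * (starRingEnd ℂ) (h g)

/-- `f` is the character of a finite-dimensional complex representation of `G`. -/
def IsChar (G : Type*) [Group G] (f : G → ℂ) : Prop :=
  ∃ (n : ℕ) (ρ : G →* Matrix.GeneralLinearGroup (Fin n) ℂ),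
    f = fun g => Matrix.trace ((ρ g : Matrix (Fin n) (Fin n) ℂ))

/-- `f` is a linear (degree one) character of `G`. -/
def IsLinearChar (G : Type*) [Group G] (f : G → ℂ) : Prop :=
  ∃ ρ : G →* ℂˣ, f = fun g => (ρ g : ℂ)

/-- `f` is an irreducible character of `G`: a character of norm one. -/
def IsIrrChar (G : Type*) [Group G] [Finite G] (f : G → ℂ) : Prop :=
  IsChar G f ∧ cdot G f f = 1

/-- The class function on `G` induced from a class function on a subgroup `H`. -/
def ind {G : Type*} [Group G] [Finite G] (H : Subgroup G) (f : H → ℂ) : G → ℂ :=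
  fun g => (Nat.card H : ℂ)⁻¹ *
    ∑ᶠ x : G, if h : x * g * x⁻¹ ∈ H then f ⟨x * g * x⁻¹, h⟩ else 0

/-- Restriction of a class function on `G` to a subgroup `H`. -/
def res {G : Type*} [Group G] (H : Subgroup G) (f : G → ℂ) : H → ℂ := fun x => f x

/-- Restriction of a class function on a subgroup `K` to a smaller subgroup `H ≤ K`. -/
def resTo {G : Type*} [Group G] {K H : Subgroup G} (hHK : H ≤ K) (f : K → ℂ) : H → ℂ :=
  fun x => f ⟨x.1, hHK x.2⟩

/-- Induction of a class function from a subgroup `H` to a larger subgroup `K`. -/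
def indTo {G : Type*} [Group G] [Finite G] (K H : Subgroup G) (f : H → ℂ) : K → ℂ :=
  ind (H.subgroupOf K) fun y => f ⟨y.1.1, Subgroup.mem_subgroupOf.mp y.2⟩

/-- `G` is almost monomial. -/
def IsAlmostMonomial (G : Type*) [Group G] [Finite G] : Prop :=
  ∀ χ φ : G → ℂ, IsIrrChar G χ → IsIrrChar G φ → χ ≠ φ →
    ∃ (H : Subgroup G) (l : H → ℂ), IsLinearChar H l ∧
      cdot G (ind H l) χ ≠ 0 ∧ cdot G (ind H l) φ = 0

/-- `G` is relative almost monomial with respect to the (normal) subgroup `N`. -/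
def IsRelAlmostMonomial (G : Type*) [Group G] [Finite G] (N : Subgroup G) : Prop :=
  ∀ χ φ : G → ℂ, IsIrrChar G χ → IsIrrChar G φ → χ ≠ φ →
    ∃ (H : Subgroup G) (hNH : N ≤ H) (ψ : H → ℂ), IsIrrChar H ψ ∧
      IsIrrChar N (resTo hNH ψ) ∧
      cdot G (ind H ψ) χ ≠ 0 ∧ cdot G (ind H ψ) φ = 0

/-- `H` is a subnormal subgroup of `G`. -/
def IsSubnormalSubgroup (G : Type*) [Group G] (H : Subgroup G) : Prop :=
  ∃ (n : ℕ) (c : Fin (n + 1) → Subgroup G), c 0 = H ∧ c (Fin.last n) = ⊤ ∧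
    ∀ i : Fin n, ((c i.castSucc).subgroupOf (c i.succ)).Normal

/-- `G` is normally almost monomial. -/
def IsNormallyAlmostMonomial (G : Type*) [Group G] [Finite G] : Prop :=
  ∀ χ φ : G → ℂ, IsIrrChar G χ → IsIrrChar G φ → χ ≠ φ →
    ∃ (H : Subgroup G), H.Normal ∧ ∃ l : H → ℂ, IsLinearChar H l ∧
      cdot G (ind H l) χ ≠ 0 ∧ cdot G (ind H l) φ = 0

/-- `G` is subnormally almost monomial. -/
def IsSubnormallyAlmostMonomial (G : Type*) [Group G] [Finite G] : Prop :=
  ∀ χ φ : G → ℂ, IsIrrChar G χ → IsIrrChar G φ → χ ≠ φ →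
    ∃ (H : Subgroup G), IsSubnormalSubgroup G H ∧ ∃ l : H → ℂ, IsLinearChar H l ∧
      cdot G (ind H l) χ ≠ 0 ∧ cdot G (ind H l) φ = 0

/-- `G` is quasi-monomial. -/
def IsQuasiMonomial (G : Type*) [Group G] [Finite G] : Prop :=
  ∀ χ : G → ℂ, IsIrrChar G χ → ∃ (H : Subgroup G) (l : H → ℂ) (d : ℕ),
    IsLinearChar H l ∧ 1 ≤ d ∧ ind H l = fun g => (d : ℂ) * χ g

/-- The set of irreducible characters of `G`. -/
def IrrSet (G : Type*) [Group G] [Finite G] : Set (G → ℂ) := {χ | IsIrrChar G χ}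

/-- `f` belongs to the semigroup `M(G)` generated by monomial characters. -/
def InMG (G : Type*) [Group G] [Finite G] (f : G → ℂ) : Prop :=
  ∃ (k : ℕ) (H : Fin (k + 1) → Subgroup G) (l : ∀ i, (H i) → ℂ),
    (∀ i, IsLinearChar (H i) (l i)) ∧ f = fun g => ∑ i, ind (H i) (l i) g

/-- The set of irreducible constituents of a class function `f`. -/
def Cons (G : Type*) [Group G] [Finite G] (f : G → ℂ) : Set (G → ℂ) :=
  {φ | IsIrrChar G φ ∧ cdot G φ f ≠ 0}

/-- `L_t(G)`: the number of constituent-sets of size `t` of characters in `M(G)`. -/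
def Lt (G : Type*) [Group G] [Finite G] (t : ℕ) : ℕ :=
  Nat.card {S : Set (G → ℂ) // ∃ f, InMG G f ∧ Cons G f = S ∧ Nat.card S = t}

end

/-!
Inflation along `G → G ⧸ A` preserves characters, irreducibility and the inner product, and
commutes with induction from subgroups containing `A`. So for `χ ≠ φ` in `Irr(G ⧸ A)` the
hypothesis, applied to their inflations, yields `N ≤ H` and `ψ ∈ Irr(H)`, and it suffices to see
that `A ≤ ker ψ`: then `ψ` descends to `H ⧸ A`, which does the job for `G ⧸ A`.

By Frobenius reciprocity `ψ` pairs nontrivially with the restriction of the inflated `χ`, which is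
constant on cosets of `A ∩ H`. Hence the average `P` of the representation `ρ` of `ψ` over the
normal subgroup `A ∩ H` is a nonzero idempotent commuting with `ρ`. The commutant of `ρ` is the
image of the averaging projection `B ↦ avg_h ρ(h) B ρ(h)⁻¹`, whose trace is `⟨ψ, ψ⟩ = 1`; so it
consists of scalars, `P = 1`, and `A ∩ H` acts trivially.
-/

open Function

section Inflation

variable {G Q : Type*} [Group G] [Group Q]

theorem IsChar.comp {f : Q → ℂ} (hf : IsChar Q f) (p : G →* Q) : IsChar G (f ∘ p) := by
  obtain ⟨n, ρ, rfl⟩ := hf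
  exact ⟨n, ρ.comp p, rfl⟩

theorem IsChar.resTo {H K : Subgroup G} {f : K → ℂ} (hf : IsChar K f) (hHK : H ≤ K) :
    IsChar H (resTo hHK f) :=
  hf.comp (Subgroup.inclusion hHK)

theorem resTo_comp_subgroupMap (p : G →* Q) {N H : Subgroup G} (hNH : N ≤ H)
    (f : H.map p → ℂ) :
    resTo (Subgroup.map_mono hNH) f ∘ p.subgroupMap N = resTo hNH (f ∘ p.subgroupMap H) :=
  rfl

theorem card_eq_card_ker_mul_of_surjective (p : G →* Q) (hp : Surjective p) :
    Nat.card G = Nat.card p.ker * Nat.card Q := by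
  rw [← p.ker.card_mul_index, Subgroup.index_ker, MonoidHom.range_eq_top.mpr hp,
    Subgroup.card_top]

variable [Finite G]

theorem finsum_comp_of_surjective (p : G →* Q) (hp : Surjective p) (F : Q → ℂ) :
    ∑ᶠ x, F (p x) = Nat.card p.ker * ∑ᶠ y, F y := by
  have := Finite.of_surjective p hp
  have := Fintype.ofFinite G
  have := Fintype.ofFinite Q
  have hfiber (y : Q) : (Finset.univ.filter fun x => p x = y).card = Nat.card p.ker := by
    rw [MonoidHom.card_fiber_eq_of_mem_range p (hp y) ⟨1, map_one p⟩, Nat.card_eq_fintype_card,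
      Fintype.card_subtype]
    simp only [MonoidHom.mem_ker]
  rw [finsum_eq_sum_of_fintype, finsum_eq_sum_of_fintype, Finset.sum_comp,
    Finset.image_univ_of_surjective hp, Finset.mul_sum]
  simp only [hfiber, nsmul_eq_mul]

theorem cdot_comp_of_surjective [Finite Q] (p : G →* Q) (hp : Surjective p) (f g : Q → ℂ) :
    cdot G (f ∘ p) (g ∘ p) = cdot Q f g := by
  have hker : (Nat.card p.ker : ℂ) ≠ 0 := Nat.cast_ne_zero.mpr Nat.card_pos.ne'
  unfold cdot
  simp only [comp_apply]
  rw [finsum_comp_of_surjective p hp (fun y => f y * starRingEnd ℂ (g y)),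
    card_eq_card_ker_mul_of_surjective p hp, Nat.cast_mul, mul_inv,
    mul_mul_mul_comm, inv_mul_cancel₀ hker, one_mul]

theorem isIrrChar_comp_iff [Finite Q] {p : G →* Q} (hp : Surjective p) {f : Q → ℂ}
    (hf : IsChar Q f) : IsIrrChar G (f ∘ p) ↔ IsIrrChar Q f := by
  simp only [IsIrrChar, hf, hf.comp p, cdot_comp_of_surjective p hp, true_and]

theorem ind_map_comp_of_ker_le [Finite Q] (p : G →* Q) (hp : Surjective p) {H : Subgroup G}
    (hH : p.ker ≤ H) (f : H.map p → ℂ) :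
    ind (H.map p) f ∘ p = ind H (f ∘ p.subgroupMap H) := by
  have hmem (w : G) : p w ∈ H.map p ↔ w ∈ H := by
    rw [← Subgroup.mem_comap, Subgroup.comap_map_eq_self hH]
  have hcard : Nat.card H = Nat.card p.ker * Nat.card (H.map p) := by
    rw [card_eq_card_ker_mul_of_surjective _ (p.subgroupMap_surjective H),
      Subgroup.ker_subgroupMap, Nat.card_congr (Subgroup.subgroupOfEquivOfLe hH).toEquiv]
  have hker : (Nat.card p.ker : ℂ) ≠ 0 := Nat.cast_ne_zero.mpr Nat.card_pos.ne'
  funext g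
  have hterm (x : G) :
      (if h : p x * p g * (p x)⁻¹ ∈ H.map p then f ⟨p x * p g * (p x)⁻¹, h⟩ else 0) =
        if h : x * g * x⁻¹ ∈ H then f (p.subgroupMap H ⟨x * g * x⁻¹, h⟩) else 0 := by
    simp only [← map_inv, ← map_mul]
    by_cases h : x * g * x⁻¹ ∈ H
    · rw [dif_pos ((hmem _).mpr h), dif_pos h]
      rfl
    · rw [dif_neg (mt (hmem _).mp h), dif_neg h]
  simp only [ind, comp_apply, ← finsum_congr hterm,
    finsum_comp_of_surjective p hp (fun y => if h : y * p g * y⁻¹ ∈ H.map p then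
      f ⟨y * p g * y⁻¹, h⟩ else 0), hcard, Nat.cast_mul, mul_inv, mul_mul_mul_comm,
    inv_mul_cancel₀ hker, one_mul]

end Inflation

section Frobenius

variable {G : Type*} [Group G]

theorem IsChar.apply_conj {f : G → ℂ} (hf : IsChar G f) (x g : G) : f (x * g * x⁻¹) = f g := by
  obtain ⟨n, ρ, rfl⟩ := hf
  simp only [map_mul, map_inv, Units.val_mul]
  rw [Matrix.trace_mul_cycle, Units.inv_mul, Matrix.one_mul]

theorem sum_dite_mem_subgroup [Fintype G] (H : Subgroup G) (F : H → ℂ) :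
    ∑ g : G, (if h : g ∈ H then F ⟨g, h⟩ else 0) = ∑ y : H, F y := by
  rw [← Finset.sum_filter_of_ne (p := (· ∈ H)) fun g _ hg => by
      simpa using (dite_ne_right_iff.mp hg).1,
    Finset.sum_subtype (p := (· ∈ H)) _ fun g => by simp]
  exact Finset.sum_congr rfl fun y _ => dif_pos y.2

theorem cdot_ind [Finite G] (H : Subgroup G) (f : H → ℂ) {χ : G → ℂ}
    (hχ : ∀ x g, χ (x * g * x⁻¹) = χ g) :
    cdot G (ind H f) χ = cdot H f (res H χ) := by
  have := Fintype.ofFinite G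
  have hG : (Nat.card G : ℂ) ≠ 0 := Nat.cast_ne_zero.mpr Nat.card_pos.ne'
  have hinner (x : G) :
      ∑ g, (if h : x * g * x⁻¹ ∈ H then f ⟨x * g * x⁻¹, h⟩ else 0) * starRingEnd ℂ (χ g) =
        ∑ y : H, f y * starRingEnd ℂ (χ y) := by
    rw [← sum_dite_mem_subgroup]
    refine Fintype.sum_equiv (MulAut.conj x).toEquiv _ _ fun g => ?_
    simp only [MulEquiv.toEquiv_eq_coe, EquivLike.coe_coe, MulAut.conj_apply, hχ x g]
    split_ifs <;> simp
  simp only [cdot, ind, res, finsum_eq_sum_of_fintype, mul_assoc (G := ℂ), Finset.sum_mul,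
    ← Finset.mul_sum]
  rw [Finset.sum_comm, Fintype.sum_congr _ _ hinner, Finset.sum_const, Finset.card_univ,
    ← Nat.card_eq_fintype_card, nsmul_eq_mul, mul_left_comm,
    inv_mul_cancel_left₀ hG]

end Frobenius

section Representation

open Matrix
open scoped ComplexOrder

variable {K : Type*} [Group K] {n : ℕ}

def traceChar (ρ : K →* GL (Fin n) ℂ) (g : K) : ℂ := trace (ρ g : Matrix (Fin n) (Fin n) ℂ)

theorem isChar_traceChar (ρ : K →* GL (Fin n) ℂ) : IsChar K (traceChar ρ) := ⟨n, ρ, rfl⟩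

theorem Matrix.trace_eq_star_trace_of_conjTranspose_mul_mul_eq {m R : Type*} [Fintype m]
    [DecidableEq m] [CommRing R] [StarRing R] {M M' Q : Matrix m m R} (hQ : IsUnit Q)
    (hMQ : Mᴴ * Q * M = Q) (hM : M * M' = 1) : M'.trace = star M.trace := by
  obtain ⟨u, rfl⟩ := hQ
  have huM' : (u : Matrix m m R) * M' = Mᴴ * u :=
    calc (u : Matrix m m R) * M' = Mᴴ * u * M * M' := by rw [hMQ]
      _ = Mᴴ * u := by rw [Matrix.mul_assoc, hM, Matrix.mul_one]
  rw [← trace_conjTranspose, ← u.inv_mul_cancel_left M', huM', trace_mul_comm,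
    Matrix.mul_assoc, u.mul_inv, Matrix.mul_one]

noncomputable def invariantForm [Fintype K] (ρ : K →* GL (Fin n) ℂ) : Matrix (Fin n) (Fin n) ℂ :=
  ∑ h, (ρ h : Matrix (Fin n) (Fin n) ℂ)ᴴ * ρ h

theorem isUnit_invariantForm [Fintype K] (ρ : K →* GL (Fin n) ℂ) : IsUnit (invariantForm ρ) := by
  rw [invariantForm, ← Finset.add_sum_erase _ _ (Finset.mem_univ 1), map_one, Units.val_one,
    conjTranspose_one, Matrix.mul_one]
  exact (PosDef.one.add_posSemidef (posSemidef_sum _ fun h _ =>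
    posSemidef_conjTranspose_mul_self _)).isUnit

theorem conjTranspose_mul_invariantForm_mul [Fintype K] (ρ : K →* GL (Fin n) ℂ) (g : K) :
    (ρ g : Matrix (Fin n) (Fin n) ℂ)ᴴ * invariantForm ρ * ρ g = invariantForm ρ := by
  rw [invariantForm, Matrix.mul_sum, Finset.sum_mul]
  refine Fintype.sum_equiv (Equiv.mulRight g) _ _ fun h => ?_
  simp only [Equiv.coe_mulRight, map_mul, Units.val_mul, conjTranspose_mul, Matrix.mul_assoc]

-- Unitary trick: `ρ g` preserves the invertible form `invariantForm ρ`, so `ρ g⁻¹` is similar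
-- to `(ρ g)ᴴ`.
theorem traceChar_inv [Finite K] (ρ : K →* GL (Fin n) ℂ) (g : K) :
    traceChar ρ g⁻¹ = starRingEnd ℂ (traceChar ρ g) := by
  have := Fintype.ofFinite K
  refine trace_eq_star_trace_of_conjTranspose_mul_mul_eq (isUnit_invariantForm ρ)
    (conjTranspose_mul_invariantForm_mul ρ g) ?_
  rw [map_inv, Units.mul_inv]

theorem Matrix.trace_mulLeft_comp_mulRight {m R : Type*} [Fintype m] [DecidableEq m]
    [CommRing R] (M M' : Matrix m m R) :
    LinearMap.trace R (Matrix m m R) (LinearMap.mulLeft R M ∘ₗ LinearMap.mulRight R M') =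
      M.trace * M'.trace := by
  rw [LinearMap.trace_eq_matrix_trace R (stdBasis R m m), Matrix.trace, Fintype.sum_prod_type,
    Matrix.trace, Matrix.trace, Finset.sum_mul_sum]
  refine Finset.sum_congr rfl fun i _ => Finset.sum_congr rfl fun j _ => ?_
  rw [diag_apply, LinearMap.toMatrix_apply, stdBasis_eq_single]
  simp [stdBasis, mul_apply, single, ite_and]

section Commutant

variable [Fintype K] (ρ : K →* GL (Fin n) ℂ)

noncomputable def conjAverage : Matrix (Fin n) (Fin n) ℂ →ₗ[ℂ] Matrix (Fin n) (Fin n) ℂ :=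
  (Nat.card K : ℂ)⁻¹ • ∑ h, LinearMap.mulLeft ℂ (ρ h : Matrix (Fin n) (Fin n) ℂ) ∘ₗ
    LinearMap.mulRight ℂ (ρ h⁻¹ : Matrix (Fin n) (Fin n) ℂ)

theorem conjAverage_apply (B : Matrix (Fin n) (Fin n) ℂ) :
    conjAverage ρ B = (Nat.card K : ℂ)⁻¹ • ∑ h, (ρ h : Matrix (Fin n) (Fin n) ℂ) * B * ρ h⁻¹ := by
  simp [conjAverage, Matrix.mul_assoc]

theorem conjAverage_apply_of_commute {B : Matrix (Fin n) (Fin n) ℂ}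
    (hB : ∀ h, Commute (ρ h : Matrix (Fin n) (Fin n) ℂ) B) : conjAverage ρ B = B := by
  have hK : (Nat.card K : ℂ) ≠ 0 := Nat.cast_ne_zero.mpr Nat.card_pos.ne'
  simp only [conjAverage_apply, (hB _).eq, Matrix.mul_assoc, ← Units.val_mul, ← map_mul,
    mul_inv_cancel, map_one, Units.val_one, Matrix.mul_one, Finset.sum_const, Finset.card_univ,
    ← Nat.card_eq_fintype_card, ← Nat.cast_smul_eq_nsmul ℂ, smul_smul, inv_mul_cancel₀ hK,
    one_smul]

theorem commute_conjAverage_apply (B : Matrix (Fin n) (Fin n) ℂ) (g : K) :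
    Commute (ρ g : Matrix (Fin n) (Fin n) ℂ) (conjAverage ρ B) := by
  rw [Commute, SemiconjBy, conjAverage_apply, Matrix.mul_smul, Matrix.smul_mul, Finset.mul_sum,
    Finset.sum_mul]
  congr 1
  refine Fintype.sum_equiv (Equiv.mulLeft g) _ _ fun h => ?_
  simp only [Equiv.coe_mulLeft, _root_.mul_inv_rev, map_mul, map_inv, Units.val_mul,
    Matrix.mul_assoc, Units.inv_mul, Matrix.mul_one]

theorem trace_conjAverage :
    LinearMap.trace ℂ _ (conjAverage ρ) = cdot K (traceChar ρ) (traceChar ρ) := by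
  simp only [conjAverage, map_smul, map_sum, trace_mulLeft_comp_mulRight, cdot,
    finsum_eq_sum_of_fintype, smul_eq_mul]
  congr 1
  refine Finset.sum_congr rfl fun h _ => ?_
  rw [← traceChar_inv]
  rfl

end Commutant

end Representation

section Schur

variable {K : Type*} [Group K] [Finite K] {n : ℕ} (ρ : K →* GL (Fin n) ℂ)

theorem exists_smul_one_eq_of_commute (hρ : cdot K (traceChar ρ) (traceChar ρ) = 1)
    {B : Matrix (Fin n) (Fin n) ℂ} (hB : ∀ h, Commute (ρ h : Matrix (Fin n) (Fin n) ℂ) B) :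
    ∃ c : ℂ, c • 1 = B := by
  have := Fintype.ofFinite K
  rcases subsingleton_or_nontrivial (Matrix (Fin n) (Fin n) ℂ) with _ | _
  · exact ⟨0, Subsingleton.elim _ _⟩
  have hproj : LinearMap.IsProj (LinearMap.range (conjAverage ρ)) (conjAverage ρ) :=
    ⟨LinearMap.mem_range_self _, fun _ ⟨y, hy⟩ =>
      hy ▸ conjAverage_apply_of_commute ρ (commute_conjAverage_apply ρ y)⟩
  have hrank : Module.finrank ℂ (LinearMap.range (conjAverage ρ)) = 1 := by
    exact_mod_cast hproj.trace.symm.trans ((trace_conjAverage ρ).trans hρ)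
  have hone : (⟨1, 1, conjAverage_apply_of_commute ρ fun _ => Commute.one_right _⟩ :
      LinearMap.range (conjAverage ρ)) ≠ 0 := by
    simp [← Subtype.coe_ne_coe]
  obtain ⟨c, hc⟩ := (finrank_eq_one_iff_of_nonzero' _ hone).mp hrank
    ⟨B, B, conjAverage_apply_of_commute ρ hB⟩
  exact ⟨c, congrArg Subtype.val hc⟩

theorem eq_one_of_commute_of_isIdempotentElem (hρ : cdot K (traceChar ρ) (traceChar ρ) = 1)
    {P : Matrix (Fin n) (Fin n) ℂ} (hP : ∀ h, Commute (ρ h : Matrix (Fin n) (Fin n) ℂ) P)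
    (hidem : IsIdempotentElem P) (hne : P ≠ 0) : P = 1 := by
  obtain ⟨c, rfl⟩ := exists_smul_one_eq_of_commute ρ hρ hP
  have hone : (1 : Matrix (Fin n) (Fin n) ℂ) ≠ 0 := fun h => hne (by rw [h, smul_zero])
  have hc : IsIdempotentElem c := smul_left_injective ℂ hone <| by
    simpa [IsIdempotentElem, smul_smul] using hidem
  rcases IsIdempotentElem.iff_eq_zero_or_one.mp hc with rfl | rfl
  · exact absurd (zero_smul ℂ _) hne
  · exact one_smul ℂ _

end Schur

section Kernel

open Matrix

variable {K : Type*} [Group K] {n : ℕ} (ρ : K →* GL (Fin n) ℂ) (B : Subgroup K)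

noncomputable def subgroupAverage [Fintype B] : Matrix (Fin n) (Fin n) ℂ :=
  (Nat.card B : ℂ)⁻¹ • ∑ b : B, (ρ b : Matrix (Fin n) (Fin n) ℂ)

variable [Fintype B]

theorem mul_subgroupAverage {b : K} (hb : b ∈ B) :
    (ρ b : Matrix (Fin n) (Fin n) ℂ) * subgroupAverage ρ B = subgroupAverage ρ B := by
  rw [subgroupAverage, Matrix.mul_smul, Finset.mul_sum]
  congr 1
  exact Fintype.sum_equiv (Equiv.mulLeft ⟨b, hb⟩) _ _ fun b' => by
    simp [← Units.val_mul, ← map_mul]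

theorem isIdempotentElem_subgroupAverage : IsIdempotentElem (subgroupAverage ρ B) := by
  have hB : (Nat.card B : ℂ) ≠ 0 := Nat.cast_ne_zero.mpr Nat.card_pos.ne'
  nth_rewrite 1 [IsIdempotentElem, subgroupAverage]
  rw [Matrix.smul_mul, Finset.sum_mul, Finset.sum_congr rfl fun b _ => mul_subgroupAverage ρ B b.2,
    Finset.sum_const, Finset.card_univ, ← Nat.card_eq_fintype_card, ← Nat.cast_smul_eq_nsmul ℂ,
    smul_smul, inv_mul_cancel₀ hB, one_smul]

theorem commute_subgroupAverage [B.Normal] (g : K) :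
    Commute (ρ g : Matrix (Fin n) (Fin n) ℂ) (subgroupAverage ρ B) := by
  rw [Commute, SemiconjBy, subgroupAverage, Matrix.mul_smul, Matrix.smul_mul, Finset.mul_sum,
    Finset.sum_mul]
  congr 1
  refine Fintype.sum_equiv (MulAut.conjNormal g).toEquiv _ _ fun b => ?_
  simp only [MulEquiv.toEquiv_eq_coe, EquivLike.coe_coe, MulAut.conjNormal_apply,
    ← Units.val_mul, ← map_mul, inv_mul_cancel_right]

theorem sum_trace_subgroupAverage_mul [Fintype K] {f : K → ℂ}
    (hf : ∀ b ∈ B, ∀ x, f (b * x) = f x) :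
    ∑ x, trace (subgroupAverage ρ B * (ρ x : Matrix (Fin n) (Fin n) ℂ)) * starRingEnd ℂ (f x) =
      ∑ x, traceChar ρ x * starRingEnd ℂ (f x) := by
  have hB : (Nat.card B : ℂ) ≠ 0 := Nat.cast_ne_zero.mpr Nat.card_pos.ne'
  have hshift (b : B) : ∑ x, traceChar ρ (b * x) * starRingEnd ℂ (f (b * x)) =
      ∑ x, traceChar ρ x * starRingEnd ℂ (f x) :=
    Fintype.sum_equiv (Equiv.mulLeft (b : K)) _ _ fun _ => rfl
  have hterm (b : B) (x : K) :
      trace ((ρ b : Matrix (Fin n) (Fin n) ℂ) * (ρ x : Matrix (Fin n) (Fin n) ℂ)) *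
        starRingEnd ℂ (f x) =
        traceChar ρ (b * x) * starRingEnd ℂ (f (b * x)) := by
    rw [hf b b.2, traceChar, map_mul, Units.val_mul]
  simp_rw [subgroupAverage, Matrix.smul_mul, trace_smul, Finset.sum_mul, trace_sum, smul_eq_mul,
    mul_assoc (G := ℂ), ← Finset.mul_sum, Finset.sum_mul, hterm]
  rw [Finset.sum_comm, Fintype.sum_congr _ _ hshift, Finset.sum_const, Finset.card_univ,
    ← Nat.card_eq_fintype_card, nsmul_eq_mul, inv_mul_cancel_left₀ hB]

theorem subgroupAverage_ne_zero [Finite K] {f : K → ℂ} (hf : ∀ b ∈ B, ∀ x, f (b * x) = f x)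
    (hne : cdot K (traceChar ρ) f ≠ 0) : subgroupAverage ρ B ≠ 0 := by
  have := Fintype.ofFinite K
  intro h
  apply hne
  rw [cdot, finsum_eq_sum_of_fintype, ← sum_trace_subgroupAverage_mul ρ B hf, h]
  simp

end Kernel

theorem le_ker_of_cdot_ne_zero {K : Type*} [Group K] [Finite K] {n : ℕ} (ρ : K →* GL (Fin n) ℂ)
    (hρ : cdot K (traceChar ρ) (traceChar ρ) = 1) {B : Subgroup K} [B.Normal] {f : K → ℂ}
    (hf : ∀ b ∈ B, ∀ x, f (b * x) = f x) (hne : cdot K (traceChar ρ) f ≠ 0) : B ≤ ρ.ker := by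
  have := Fintype.ofFinite B
  have hP : subgroupAverage ρ B = 1 :=
    eq_one_of_commute_of_isIdempotentElem ρ hρ (commute_subgroupAverage ρ B)
      (isIdempotentElem_subgroupAverage ρ B) (subgroupAverage_ne_zero ρ B hf hne)
  intro b hb
  have hb' := mul_subgroupAverage ρ B hb
  rw [hP, Matrix.mul_one] at hb'
  exact Units.ext hb'

theorem exists_traceChar_comp_eq {K L : Type*} [Group K] [Group L] {n : ℕ} {q : K →* L}
    (hq : Surjective q) (ρ : K →* GL (Fin n) ℂ) (h : q.ker ≤ ρ.ker) :
    ∃ ρ' : L →* GL (Fin n) ℂ, traceChar ρ' ∘ q = traceChar ρ :=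
  ⟨q.liftOfRightInverse _ (rightInverse_surjInv hq) ⟨ρ, h⟩,
    congrArg traceChar (q.liftOfRightInverse_comp _ (rightInverse_surjInv hq) ⟨ρ, h⟩)⟩

theorem stmt14_general (G : Type*) [Group G] [Finite G] (N A : Subgroup G) [A.Normal]
    (hAN : A ≤ N) (h : IsRelAlmostMonomial G N) :
    IsRelAlmostMonomial (G ⧸ A) (N.map (QuotientGroup.mk' A)) := by
  intro χ φ hχ hφ hne
  set p := QuotientGroup.mk' A
  have hp : Surjective p := QuotientGroup.mk'_surjective A
  have hkerp : p.ker = A := QuotientGroup.ker_mk' A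
  obtain ⟨H, hNH, ψ, hψ, hψN, hχψ, hφψ⟩ := h (χ ∘ p) (φ ∘ p)
    ((isIrrChar_comp_iff hp hχ.1).mpr hχ) ((isIrrChar_comp_iff hp hφ.1).mpr hφ)
    (hp.injective_comp_right.ne hne)
  obtain ⟨n, ρ, rfl⟩ : ∃ n, ∃ ρ : H →* GL (Fin n) ℂ, ψ = traceChar ρ := hψ.1
  have hAρ : A.subgroupOf H ≤ ρ.ker := by
    refine le_ker_of_cdot_ne_zero ρ hψ.2 (f := res H (χ ∘ p)) (fun b hb x => ?_) ?_
    · have hb1 : p b = 1 := (QuotientGroup.eq_one_iff _).mpr (Subgroup.mem_subgroupOf.mp hb)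
      simp [res, hb1]
    · rwa [← cdot_ind H _ (hχ.1.comp p).apply_conj]
  obtain ⟨ρ', hρ'⟩ := exists_traceChar_comp_eq (p.subgroupMap_surjective H) ρ
    (by rwa [Subgroup.ker_subgroupMap, hkerp])
  have hind : ind (H.map p) (traceChar ρ') ∘ p = ind H (traceChar ρ) := by
    rw [ind_map_comp_of_ker_le p hp (hkerp.le.trans (hAN.trans hNH)), hρ']
  refine ⟨H.map p, Subgroup.map_mono hNH, traceChar ρ',
    (isIrrChar_comp_iff (p.subgroupMap_surjective H) (isChar_traceChar ρ')).mp (hρ' ▸ hψ),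
    (isIrrChar_comp_iff (p.subgroupMap_surjective N) ((isChar_traceChar ρ').resTo _)).mp ?_,
    ?_, ?_⟩
  · rwa [resTo_comp_subgroupMap, hρ']
  · rwa [← cdot_comp_of_surjective p hp, hind]
  · rwa [← cdot_comp_of_surjective p hp, hind]

theorem stmt14 (G : Type*) [Group G] [Finite G] (N A : Subgroup G) [N.Normal] [A.Normal]
    (hAN : A ≤ N) (h : IsRelAlmostMonomial G N) :
    IsRelAlmostMonomial (G ⧸ A) (N.map (QuotientGroup.mk' A)) :=
  stmt14_general G N A hAN h
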